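/- arXiv:1804.02531 — 4 statements merged into one kernel-verified Lean document; each statement's English description precedes it below -/
import Mathlib

section
/- Let n ≥ 2, m ≥ 1, and let L be a length distribution of length m with UD_n(L) nonempty. Then ρ_{n,L} = |PR_n(L)|/|UD_n(L)| ≥ q_{n,m} · ς_{n,m}^{m−1}. -/
open Finset Filter Topology

/-- A code `(v 0, …, v (m-1))` is *uniquely decodable* if any two nonempty sequences of
indices whose corresponding concatenations of code words coincide are equal. -/
def IsUDCode {X : Type*} {m : ℕ} (v : Fin m → List X) : Prop :=
  ∀ s t : List (Fin m), s ≠ [] → t ≠ [] →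
    (s.map v).flatten = (t.map v).flatten → s = t

/-- A *prefix code*: an injective sequence of nonempty words where no code word
is a prefix of another. -/
def IsPrefixCode {X : Type*} {m : ℕ} (v : Fin m → List X) : Prop :=
  Function.Injective v ∧ (∀ i, v i ≠ []) ∧ ∀ i j, i ≠ j → ¬ v i <+: v j

/-- The set of uniquely decodable codes over an `n`-letter alphabet with
length distribution `L`. -/
def UD (n : ℕ) {m : ℕ} (L : Fin m → ℕ) : Set (Fin m → List (Fin n)) :=
  {v | (∀ i, (v i).length = L i) ∧ IsUDCode v}

/-- The set of prefix codes over an `n`-letter alphabet with length distribution `L`. -/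
def PR (n : ℕ) {m : ℕ} (L : Fin m → ℕ) : Set (Fin m → List (Fin n)) :=
  {v | (∀ i, (v i).length = L i) ∧ IsPrefixCode v}

/-- `ρ_{n,L} = |PR_n(L)| / |UD_n(L)|`. -/
noncomputable def rho (n : ℕ) {m : ℕ} (L : Fin m → ℕ) : ℝ :=
  ((PR n L).ncard : ℝ) / ((UD n L).ncard : ℝ)

/-- `ξ_{n,m} = inf_{L ∈ ℒ_{n,m}} ρ_{n,L}`. -/
noncomputable def xi (n m : ℕ) : ℝ :=
  sInf {r : ℝ | ∃ L : Fin m → ℕ, (∀ i, 1 ≤ L i) ∧ (UD n L).Nonempty ∧ r = rho n L}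

/-- `ς_{n,m} = (n - (m mod (n-1))) / n^{⌊m/(n-1)⌋ + 1}`. -/
noncomputable def varsigma (n m : ℕ) : ℝ :=
  ((n : ℝ) - (m % (n - 1) : ℕ)) / (n : ℝ) ^ (m / (n - 1) + 1)

/-- `q_{n,m}`: `1` if `n ≥ m`, and `(m-1)!/(m-1)^{m-1}` if `n < m`. -/
noncomputable def qnm (n m : ℕ) : ℝ :=
  if m ≤ n then 1 else (Nat.factorial (m - 1) : ℝ) / ((m - 1 : ℕ) : ℝ) ^ (m - 1)

/-- `ϖ_{n,m} = ∏_{i=1}^{m-1} (1 - (1 - n^{-i})/(n-1))`. -/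
noncomputable def varpi (n m : ℕ) : ℝ :=
  ∏ i ∈ Finset.Icc 1 (m - 1), (1 - (1 - 1 / (n : ℝ) ^ i) / ((n : ℝ) - 1))

/-- `η_{n,m} = 1 + Σ_{i=1}^{m-1} C(m-1,i)/(n^i - 1)`. -/
noncomputable def eta (n m : ℕ) : ℝ :=
  1 + ∑ i ∈ Finset.Icc 1 (m - 1), ((m - 1).choose i : ℝ) / ((n : ℝ) ^ i - 1)

/-!
Permuting the code words does not change `ρ`, so we may assume `L` nondecreasing. Choosing the
code words of a prefix code greedily in this order, the `i`-th one may be any word of length `Lᵢ`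
that does not extend an earlier one, which leaves at least `n^Lᵢ (1 - Kᵢ)` choices, where
`Kᵢ = ∑_{j<i} n^(-Lⱼ)`; as `|UD_n(L)| ≤ ∏ n^Lᵢ`, this gives `ρ ≥ ∏ (1 - Kᵢ)`. By Kraft–McMillan
`Kᵢ < 1`, and a sum of `i` powers `n^(-a)` that is below `1` falls short of it by at least
`ς_{n,i} ≥ ς_{n,m}`. Since `K₀ = 0` and `q_{n,m} ≤ 1`, the bound follows.
-/

open InformationTheory

section Varsigma

variable {n : ℕ}

lemma varsigma_mul_add (Q : ℕ) {r : ℕ} (hr : r < n - 1) :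
    varsigma n ((n - 1) * Q + r) = ((n : ℝ) - r) / (n : ℝ) ^ (Q + 1) := by
  rw [varsigma, Nat.mul_add_mod, Nat.mod_eq_of_lt hr, Nat.mul_add_div (by omega),
    Nat.div_eq_of_lt hr, add_zero]

lemma varsigma_pos (hn : 2 ≤ n) (k : ℕ) : 0 < varsigma n k := by
  have hr : k % (n - 1) < n := by have := Nat.mod_lt k (by omega : 0 < n - 1); omega
  have hr' : ((k % (n - 1) : ℕ) : ℝ) < n := by exact_mod_cast hr
  exact div_pos (by linarith) (by positivity)

lemma varsigma_le_inv_pow (hn : 0 < n) (k : ℕ) :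
    varsigma n k ≤ ((n : ℝ) ^ (k / (n - 1)))⁻¹ := by
  have hn' : (0 : ℝ) < n := by exact_mod_cast hn
  rw [varsigma, div_le_iff₀ (by positivity), pow_succ, ← mul_assoc,
    inv_mul_cancel₀ (by positivity), one_mul]
  have : (0 : ℝ) ≤ (k % (n - 1) : ℕ) := by positivity
  linarith

lemma varsigma_succ_add_le (hn : 2 ≤ n) (k : ℕ) :
    varsigma n (k + 1) + ((n : ℝ) ^ ((k + 1) / (n - 1) + 1))⁻¹ ≤ varsigma n k := by
  have hn' : (2 : ℝ) ≤ n := by exact_mod_cast hn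
  obtain ⟨Q, r, hr, rfl⟩ : ∃ Q r, r < n - 1 ∧ k = (n - 1) * Q + r :=
    ⟨k / (n - 1), k % (n - 1), Nat.mod_lt _ (by omega), (Nat.div_add_mod k (n - 1)).symm⟩
  rw [varsigma_mul_add Q hr]
  rcases Nat.lt_or_ge (r + 1) (n - 1) with hr1 | hr1
  · rw [add_assoc, varsigma_mul_add Q hr1, Nat.mul_add_div (by omega), Nat.div_eq_of_lt hr1,
      add_zero, inv_eq_one_div, ← add_div]
    push_cast
    exact le_of_eq (by ring)
  · have hk : (n - 1) * Q + r + 1 = (n - 1) * (Q + 1) + 0 := by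
      rw [Nat.mul_succ]; omega
    have hr2 : ((r : ℕ) : ℝ) = n - 2 := by
      rw [show r = n - 2 by omega, Nat.cast_sub hn]; norm_num
    rw [hk, varsigma_mul_add (Q + 1) (by omega), Nat.mul_add_div (by omega), Nat.zero_div,
      add_zero, hr2, pow_succ _ (Q + 1)]
    have hpow : (0 : ℝ) < (n : ℝ) ^ (Q + 1) := by positivity
    field_simp
    nlinarith

lemma varsigma_antitone (hn : 2 ≤ n) : Antitone (varsigma n) :=
  antitone_nat_of_succ_le fun k => by
    have : (0 : ℝ) < ((n : ℝ) ^ ((k + 1) / (n - 1) + 1))⁻¹ := by positivity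
    linarith [varsigma_succ_add_le hn k]

end Varsigma

section Deficiency

variable {n : ℕ} {ι : Type*}

/-- Integrality: the sum is a multiple of `(n ^ Q)⁻¹`. -/
lemma sum_inv_pow_le_one_sub_inv_pow (hn : 0 < n) (f : ι → ℕ) (s : Finset ι) {Q : ℕ}
    (hf : ∀ j ∈ s, f j ≤ Q) (hs : ∑ j ∈ s, ((n : ℝ) ^ f j)⁻¹ < 1) :
    ∑ j ∈ s, ((n : ℝ) ^ f j)⁻¹ ≤ 1 - ((n : ℝ) ^ Q)⁻¹ := by
  have hpos : (0 : ℝ) < (n : ℝ) ^ Q := by positivity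
  have hN : ((∑ j ∈ s, n ^ (Q - f j) : ℕ) : ℝ) = (n : ℝ) ^ Q * ∑ j ∈ s, ((n : ℝ) ^ f j)⁻¹ := by
    rw [mul_sum]; push_cast
    exact sum_congr rfl fun j hj => pow_sub₀ _ (by positivity) (hf j hj)
  have hlt : ∑ j ∈ s, n ^ (Q - f j) < n ^ Q := by
    have : (n : ℝ) ^ Q * ∑ j ∈ s, ((n : ℝ) ^ f j)⁻¹ < (n : ℝ) ^ Q := by nlinarith
    exact_mod_cast hN ▸ this
  have hle : ((∑ j ∈ s, n ^ (Q - f j) : ℕ) : ℝ) + 1 ≤ (n : ℝ) ^ Q := by exact_mod_cast hlt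
  rw [hN] at hle
  rw [le_sub_iff_add_le, ← mul_le_mul_iff_right₀ hpos, mul_add, mul_inv_cancel₀ hpos.ne', mul_one]
  exact hle

lemma varsigma_card_le_one_sub_sum (hn : 2 ≤ n) (f : ι → ℕ) (s : Finset ι)
    (hs : ∑ j ∈ s, ((n : ℝ) ^ f j)⁻¹ < 1) :
    varsigma n #s ≤ 1 - ∑ j ∈ s, ((n : ℝ) ^ f j)⁻¹ := by
  classical
  induction s using Finset.strongInduction with
  | _ s ih =>
  have hn0 : 0 < n := by omega
  by_cases hsmall : ∀ j ∈ s, f j ≤ #s / (n - 1)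
  · linarith [varsigma_le_inv_pow hn0 #s, sum_inv_pow_le_one_sub_inv_pow hn0 f s hsmall hs]
  · push Not at hsmall
    obtain ⟨j, hj, hbig⟩ := hsmall
    have hsplit := sum_erase_add s (fun j => ((n : ℝ) ^ f j)⁻¹) hj
    have hterm : ((n : ℝ) ^ f j)⁻¹ ≤ ((n : ℝ) ^ (#s / (n - 1) + 1))⁻¹ :=
      inv_anti₀ (by positivity) (pow_le_pow_right₀ (by exact_mod_cast hn0) hbig)
    have hstep := varsigma_succ_add_le hn #(s.erase j)
    rw [card_erase_add_one hj] at hstep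
    have hpos : (0 : ℝ) < ((n : ℝ) ^ f j)⁻¹ := by positivity
    have hih := ih _ (erase_ssubset hj) (by linarith)
    linarith

end Deficiency

namespace IsUDCode

variable {X : Type*} {m : ℕ} {v : Fin m → List X}

lemma ne_nil (h : IsUDCode v) (i : Fin m) : v i ≠ [] := fun hi => by
  simpa using h [i] [i, i] (by simp) (by simp) (by simp [hi])

lemma injective (h : IsUDCode v) : Function.Injective v := fun i j hij => by
  simpa using h [i] [j] (by simp) (by simp) (by simp [hij])

lemma comp {k : ℕ} (h : IsUDCode v) {f : Fin k → Fin m} (hf : Function.Injective f) :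
    IsUDCode (v ∘ f) := fun s t hs ht hst =>
  (List.map_injective_iff.2 hf) (h _ _ (by simpa using hs) (by simpa using ht)
    (by simpa [List.map_map] using hst))

lemma uniquelyDecodable (h : IsUDCode v) : UniquelyDecodable (Set.range v) := by
  have eq_nil : ∀ s : List (Fin m), (s.map v).flatten = [] → s = [] := fun s hs =>
    List.eq_nil_iff_forall_not_mem.2 fun i hi =>
      h.ne_nil i (List.flatten_eq_nil_iff.1 hs _ (List.mem_map_of_mem hi))
  intro L₁ L₂ h₁ h₂ hflat
  obtain ⟨s, rfl⟩ : L₁ ∈ Set.range (List.map v) := Set.range_list_map v ▸ h₁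
  obtain ⟨t, rfl⟩ : L₂ ∈ Set.range (List.map v) := Set.range_list_map v ▸ h₂
  rcases eq_or_ne s [] with rfl | hs
  · rw [eq_nil t (by simpa using hflat.symm)]
  rcases eq_or_ne t [] with rfl | ht
  · rw [eq_nil s (by simpa using hflat)]
  rw [h s t hs ht hflat]

/-- The Kraft–McMillan inequality. -/
lemma sum_inv_pow_length_le_one [Fintype X] [Nonempty X] (h : IsUDCode v) :
    ∑ i, ((Fintype.card X : ℝ) ^ (v i).length)⁻¹ ≤ 1 := by
  classical
  have hS : UniquelyDecodable ((univ.image v : Finset (List X)) : Set (List X)) := by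
    rw [coe_image, coe_univ, Set.image_univ]
    exact h.uniquelyDecodable
  simpa [sum_image h.injective.injOn, inv_pow] using kraft_mcmillan_inequality hS

end IsUDCode

lemma IsPrefixCode.comp {X : Type*} {m k : ℕ} {v : Fin m → List X} (h : IsPrefixCode v)
    {f : Fin k → Fin m} (hf : Function.Injective f) : IsPrefixCode (v ∘ f) :=
  ⟨h.1.comp hf, fun i => h.2.1 (f i), fun _ _ hij => h.2.2 _ _ (hf.ne hij)⟩

section Counting

variable (n : ℕ) {m : ℕ}

lemma finite_setOf_length_eq (L : Fin m → ℕ) :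
    {v : Fin m → List (Fin n) | ∀ i, (v i).length = L i}.Finite :=
  (Set.Finite.pi fun i => List.finite_length_eq (Fin n) (L i)).subset fun _ hv =>
    Set.mem_univ_pi.2 hv

lemma ncard_setOf_length_eq (L : Fin m → ℕ) :
    {v : Fin m → List (Fin n) | ∀ i, (v i).length = L i}.ncard = ∏ i, n ^ L i := by
  let e : {v : Fin m → List (Fin n) | ∀ i, (v i).length = L i} ≃ ∀ i, List.Vector (Fin n) (L i) :=
    { toFun := fun v i => ⟨v.1 i, v.2 i⟩
      invFun := fun f => ⟨fun i => (f i).1, fun i => (f i).2⟩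
      left_inv := fun _ => rfl
      right_inv := fun _ => rfl }
  rw [← Nat.card_coe_set_eq, Nat.card_congr e, Nat.card_eq_fintype_card, Fintype.card_pi]
  simp [card_vector]

lemma PR_finite (L : Fin m → ℕ) : (PR n L).Finite :=
  (finite_setOf_length_eq n L).subset fun _ hv => hv.1

lemma ncard_UD_le (L : Fin m → ℕ) : (UD n L).ncard ≤ ∏ i, n ^ L i :=
  (Set.ncard_le_ncard (fun _ hv => hv.1) (finite_setOf_length_eq n L)).trans_eq
    (ncard_setOf_length_eq n L)

lemma ncard_UD_pos (L : Fin m → ℕ) (hud : (UD n L).Nonempty) : 0 < (UD n L).ncard :=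
  (Set.ncard_pos ((finite_setOf_length_eq n L).subset fun _ hv => hv.1)).2 hud

lemma ncard_setOf_length_comp_perm {P : (Fin m → List (Fin n)) → Prop}
    (hP : ∀ v (σ : Equiv.Perm (Fin m)), P v → P (v ∘ σ)) (L : Fin m → ℕ)
    (σ : Equiv.Perm (Fin m)) :
    {v : Fin m → List (Fin n) | (∀ i, (v i).length = L (σ i)) ∧ P v}.ncard =
      {v : Fin m → List (Fin n) | (∀ i, (v i).length = L i) ∧ P v}.ncard := by
  symm
  rw [← Set.ncard_image_of_injective _ σ.surjective.injective_comp_right]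
  congr 1
  ext w
  constructor
  · rintro ⟨v, ⟨hlen, hv⟩, rfl⟩
    exact ⟨fun i => hlen (σ i), hP v σ hv⟩
  · rintro ⟨hlen, hw⟩
    refine ⟨w ∘ σ.symm, ⟨fun i => by simpa using hlen (σ.symm i), hP w σ.symm hw⟩, ?_⟩
    ext1 i; simp

lemma rho_comp_perm (L : Fin m → ℕ) (σ : Equiv.Perm (Fin m)) : rho n (L ∘ σ) = rho n L := by
  simp only [rho, UD, PR, Function.comp_apply]
  rw [ncard_setOf_length_comp_perm n (fun _ σ h => h.comp σ.injective),
    ncard_setOf_length_comp_perm n (fun _ σ h => h.comp σ.injective)]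

end Counting

section PrefixExtension

variable {X : Type*} [Fintype X] [DecidableEq X]

lemma card_filter_prefix_le (w : List X) (a : ℕ) :
    #{u : List.Vector X a | w <+: u.toList} ≤ Fintype.card X ^ (a - w.length) := by
  calc #{u : List.Vector X a | w <+: u.toList}
      ≤ #(univ : Finset (List.Vector X (a - w.length))) := by
        refine card_le_card_of_injOn
          (fun u => ⟨u.toList.drop w.length, by simp⟩) (fun _ _ => mem_coe.2 (mem_univ _)) ?_
        rintro u hu u' hu' heq
        rw [mem_coe, mem_filter] at hu hu'
        have hdrop : u.toList.drop w.length = u'.toList.drop w.length := congrArg Subtype.val heq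
        apply List.Vector.toList_injective
        rw [← List.prefix_iff_eq_append.1 hu.2, hdrop, List.prefix_iff_eq_append.1 hu'.2]
    _ = Fintype.card X ^ (a - w.length) := by rw [card_univ, card_vector]

/-- Union bound over the words `w j` that a new word of length `a` must avoid as prefixes. -/
lemma card_filter_forall_not_prefix_ge {ι : Type*} [Fintype ι] (w : ι → List X) (a : ℕ) :
    Fintype.card X ^ a - ∑ j, Fintype.card X ^ (a - (w j).length) ≤
      #{u : List.Vector X a | ∀ j, ¬ w j <+: u.toList} := by
  classical
  have hcover : (univ : Finset (List.Vector X a)) ⊆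
      ({u : List.Vector X a | ∀ j, ¬ w j <+: u.toList} : Finset _) ∪
        univ.biUnion fun j => ({u : List.Vector X a | w j <+: u.toList} : Finset _) := by
    intro u _
    by_cases hu : ∀ j, ¬ w j <+: u.toList
    · simp [hu]
    · push Not at hu; simp [hu]
  have hcard := (card_le_card hcover).trans (card_union_le _ _)
  have hbad : #(univ.biUnion fun j => ({u : List.Vector X a | w j <+: u.toList} : Finset _)) ≤
      ∑ j, Fintype.card X ^ (a - (w j).length) :=
    card_biUnion_le.trans (sum_le_sum fun j _ => card_filter_prefix_le (w j) a)
  rw [card_univ, card_vector] at hcard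
  omega

end PrefixExtension

lemma IsPrefixCode.snoc {X : Type*} {m : ℕ} {w : Fin m → List X} {u : List X}
    (hw : IsPrefixCode w) (hu : u ≠ []) (hlong : ∀ j, (w j).length ≤ u.length)
    (hpre : ∀ j, ¬ w j <+: u) : IsPrefixCode (Fin.snoc w u : Fin (m + 1) → List X) := by
  have hpre' : ∀ i j, i ≠ j → ¬ (Fin.snoc w u : Fin (m + 1) → List X) i <+:
      (Fin.snoc w u : Fin (m + 1) → List X) j := by
    intro i j hij
    induction i using Fin.lastCases <;> induction j using Fin.lastCases <;>
      simp only [Fin.snoc_last, Fin.snoc_castSucc]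
    · exact absurd rfl hij
    · exact fun h => hpre _
        ⟨[], by rw [List.append_nil, h.eq_of_length (le_antisymm h.length_le (hlong _))]⟩
    · exact hpre _
    · exact hw.2.2 _ _ fun h => hij (congrArg _ h)
  refine ⟨fun i j hij => ?_, fun i => ?_, hpre'⟩
  · by_contra hne
    exact hpre' i j hne (hij ▸ List.prefix_refl _)
  · induction i using Fin.lastCases <;> simp [hu, hw.2.1]

section PrefixCount

variable (n : ℕ) {m : ℕ}

lemma ncard_PR_init_mul_le {L : Fin (m + 1) → ℕ} (hmono : Monotone L) (hL : ∀ i, 1 ≤ L i) :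
    (PR n (Fin.init L)).ncard *
        (n ^ L (Fin.last m) - ∑ j : Fin m, n ^ (L (Fin.last m) - L j.castSucc)) ≤
      (PR n L).ncard := by
  rw [Set.ncard_eq_toFinset_card _ (PR_finite n _), Set.ncard_eq_toFinset_card _ (PR_finite n L),
    mul_comm]
  refine mul_card_image_le_card_of_maps_to
    (f := fun v : Fin (m + 1) → List (Fin n) => Fin.init v) (fun v hv => ?_) _ fun w hw => ?_
  · rw [Set.Finite.mem_toFinset] at hv ⊢
    exact ⟨fun i => hv.1 i.castSucc, hv.2.comp (Fin.castSucc_injective m)⟩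
  rw [Set.Finite.mem_toFinset] at hw
  have hcount := card_filter_forall_not_prefix_ge w (L (Fin.last m))
  simp only [Fintype.card_fin, hw.1] at hcount
  let extend (u : List.Vector (Fin n) (L (Fin.last m))) : Fin (m + 1) → List (Fin n) :=
    Fin.snoc w u.toList
  refine hcount.trans ((card_image_of_injective (f := extend) _ fun u u' h => ?_).symm.trans_le
    (card_le_card fun x hx => ?_))
  · exact List.Vector.toList_injective (by simpa [extend] using congrFun h (Fin.last m))
  obtain ⟨u, hu, rfl⟩ := mem_image.1 hx
  rw [mem_filter, Set.Finite.mem_toFinset]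
  refine ⟨⟨fun i => ?_, hw.2.snoc ?_ (fun j => ?_) (by simpa using hu)⟩, Fin.init_snoc _ _⟩
  · induction i using Fin.lastCases <;> simp [extend, hw.1, Fin.init]
  · rw [← List.length_pos_iff, List.Vector.toList_length]
    exact hL _
  · rw [hw.1, List.Vector.toList_length]
    exact hmono (Fin.le_last _)

/-- Greedy construction of prefix codes, adding the code words in order of increasing length. -/
lemma prod_le_ncard_PR : ∀ {m : ℕ} {L : Fin m → ℕ}, Monotone L → (∀ i, 1 ≤ L i) →
    ∏ i, (n ^ L i - ∑ j ∈ Iio i, n ^ (L i - L j)) ≤ (PR n L).ncard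
  | 0, L, _, _ => by
    rw [univ_eq_empty, prod_empty, Nat.one_le_iff_ne_zero, ← Nat.pos_iff_ne_zero,
      Set.ncard_pos (PR_finite n L)]
    exact ⟨finZeroElim, finZeroElim, finZeroElim, finZeroElim, finZeroElim⟩
  | m + 1, L, hmono, hL => by
    rw [Fin.prod_univ_castSucc]
    simp only [← Fin.map_castSuccEmb_Iio, Fin.Iio_last_eq_map, sum_map, Fin.coe_castSuccEmb]
    exact (Nat.mul_le_mul_right _ (prod_le_ncard_PR
      (fun i j h => hmono (Fin.castSucc_le_castSucc_iff.2 h)) fun i => hL _)).trans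
      (ncard_PR_init_mul_le n hmono hL)

end PrefixCount

section Ratio

variable {n m : ℕ}

lemma sum_inv_pow_le_one_of_mem_UD (hn : 0 < n) {L : Fin m → ℕ} {v : Fin m → List (Fin n)}
    (hv : v ∈ UD n L) : ∑ i, ((n : ℝ) ^ L i)⁻¹ ≤ 1 := by
  have : Nonempty (Fin n) := ⟨⟨0, hn⟩⟩
  simpa [hv.1] using hv.2.sum_inv_pow_length_le_one

lemma sum_Iio_inv_pow_add_le (L : Fin m → ℕ) (i : Fin m) :
    ∑ j ∈ Iio i, ((n : ℝ) ^ L j)⁻¹ + ((n : ℝ) ^ L i)⁻¹ ≤ ∑ j, ((n : ℝ) ^ L j)⁻¹ := by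
  have h := sum_le_univ_sum_of_nonneg (s := insert i (Iio i))
    (f := fun j => ((n : ℝ) ^ L j)⁻¹) fun _ => by positivity
  rwa [sum_insert (by simp), add_comm] at h

lemma pow_mul_one_sub_sum_Iio_le (hn : 0 < n) {L : Fin m → ℕ} (hmono : Monotone L) (i : Fin m) :
    (n : ℝ) ^ L i * (1 - ∑ j ∈ Iio i, ((n : ℝ) ^ L j)⁻¹) ≤
      ((n ^ L i - ∑ j ∈ Iio i, n ^ (L i - L j) : ℕ) : ℝ) := by
  have hexp : (n : ℝ) ^ L i * (1 - ∑ j ∈ Iio i, ((n : ℝ) ^ L j)⁻¹) =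
      ((n ^ L i : ℕ) : ℝ) - ((∑ j ∈ Iio i, n ^ (L i - L j) : ℕ) : ℝ) := by
    rw [mul_sub, mul_one, mul_sum]
    push_cast
    congr 1
    exact sum_congr rfl fun j hj =>
      (pow_sub₀ _ (by positivity) (hmono (mem_Iio.1 hj).le)).symm
  have htsub : n ^ L i ≤ n ^ L i - ∑ j ∈ Iio i, n ^ (L i - L j) + ∑ j ∈ Iio i, n ^ (L i - L j) :=
    le_tsub_add
  rw [hexp, sub_le_iff_le_add]
  exact_mod_cast htsub

lemma prod_one_sub_sum_Iio_le_rho (hn : 0 < n) {L : Fin m → ℕ} (hmono : Monotone L)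
    (hud : (UD n L).Nonempty) :
    ∏ i, (1 - ∑ j ∈ Iio i, ((n : ℝ) ^ L j)⁻¹) ≤ rho n L := by
  obtain ⟨v, hv⟩ := hud
  have hkraft := sum_inv_pow_le_one_of_mem_UD hn hv
  have hL : ∀ i, 1 ≤ L i := fun i => hv.1 i ▸ List.length_pos_iff.2 (hv.2.ne_nil i)
  have hfactor : ∀ i, 0 ≤ 1 - ∑ j ∈ Iio i, ((n : ℝ) ^ L j)⁻¹ := fun i => by
    linarith [sum_Iio_inv_pow_add_le (n := n) L i, (by positivity : (0 : ℝ) ≤ ((n : ℝ) ^ L i)⁻¹)]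
  have hN : (0 : ℝ) < ∏ i, (n : ℝ) ^ L i := by positivity
  have hUD : (0 : ℝ) < (UD n L).ncard := by exact_mod_cast ncard_UD_pos n L ⟨v, hv⟩
  calc ∏ i, (1 - ∑ j ∈ Iio i, ((n : ℝ) ^ L j)⁻¹)
      = (∏ i, (n : ℝ) ^ L i * (1 - ∑ j ∈ Iio i, ((n : ℝ) ^ L j)⁻¹)) / ∏ i, (n : ℝ) ^ L i := by
        rw [prod_mul_distrib, mul_div_cancel_left₀ _ hN.ne']
    _ ≤ ((∏ i, (n ^ L i - ∑ j ∈ Iio i, n ^ (L i - L j)) : ℕ) : ℝ) / ∏ i, (n : ℝ) ^ L i := by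
        push_cast
        gcongr with i
        · exact fun i _ => mul_nonneg (by positivity) (hfactor i)
        · exact pow_mul_one_sub_sum_Iio_le hn hmono i
    _ ≤ (PR n L).ncard / ∏ i, (n : ℝ) ^ L i := by
        gcongr
        exact_mod_cast prod_le_ncard_PR n hmono hL
    _ ≤ rho n L := by
        rw [rho]
        gcongr
        exact_mod_cast ncard_UD_le n L

lemma varsigma_pow_le_prod_one_sub_sum_Iio (hn : 2 ≤ n) {L : Fin m → ℕ}
    (hkraft : ∑ i, ((n : ℝ) ^ L i)⁻¹ ≤ 1) :
    varsigma n m ^ (m - 1) ≤ ∏ i, (1 - ∑ j ∈ Iio i, ((n : ℝ) ^ L j)⁻¹) := by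
  have hfactor : ∀ i : Fin m, varsigma n m ≤ 1 - ∑ j ∈ Iio i, ((n : ℝ) ^ L j)⁻¹ := fun i => by
    have hlt : ∑ j ∈ Iio i, ((n : ℝ) ^ L j)⁻¹ < 1 := by
      linarith [sum_Iio_inv_pow_add_le (n := n) L i, (by positivity : (0 : ℝ) < ((n : ℝ) ^ L i)⁻¹)]
    have h := varsigma_card_le_one_sub_sum hn L (Iio i) hlt
    rw [Fin.card_Iio] at h
    exact (varsigma_antitone hn i.is_lt.le).trans h
  cases m with
  | zero => simp
  | succ m =>
    rw [Fin.prod_univ_succ, show Iio (0 : Fin (m + 1)) = ∅ from Iio_bot, sum_empty, sub_zero,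
      one_mul, Nat.add_sub_cancel]
    calc varsigma n (m + 1) ^ m = ∏ _i : Fin m, varsigma n (m + 1) := by simp
      _ ≤ _ := prod_le_prod (fun _ _ => (varsigma_pos hn _).le) fun i _ => hfactor i.succ

end Ratio

lemma qnm_le_one (n m : ℕ) : qnm n m ≤ 1 := by
  unfold qnm
  split_ifs
  · exact le_rfl
  · exact div_le_one_of_le₀ (by exact_mod_cast Nat.factorial_le_pow _) (by positivity)

theorem stmt1_general (n m : ℕ) (hn : 2 ≤ n) (L : Fin m → ℕ) (hud : (UD n L).Nonempty) :
    qnm n m * varsigma n m ^ (m - 1) ≤ rho n L := by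
  let σ := Tuple.sort L
  obtain ⟨v, hv⟩ := hud
  have hvσ : v ∘ σ ∈ UD n (L ∘ σ) := ⟨fun i => hv.1 (σ i), hv.2.comp σ.injective⟩
  calc qnm n m * varsigma n m ^ (m - 1)
      ≤ varsigma n m ^ (m - 1) :=
        mul_le_of_le_one_left (pow_nonneg (varsigma_pos hn m).le _) (qnm_le_one n m)
    _ ≤ ∏ i, (1 - ∑ j ∈ Iio i, ((n : ℝ) ^ (L ∘ σ) j)⁻¹) :=
        varsigma_pow_le_prod_one_sub_sum_Iio hn (sum_inv_pow_le_one_of_mem_UD (by omega) hvσ)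
    _ ≤ rho n (L ∘ σ) := prod_one_sub_sum_Iio_le_rho (by omega) (Tuple.monotone_sort L) ⟨_, hvσ⟩
    _ = rho n L := rho_comp_perm n L σ

/-- Theorem 2 (first part): for `L ∈ ℒ_{n,m}`, `ρ_{n,L} ≥ q_{n,m}·ς_{n,m}^{m-1}`. -/
theorem stmt1 (n m : ℕ) (hn : 2 ≤ n) (hm : 1 ≤ m) (L : Fin m → ℕ)
    (hL : ∀ i, 1 ≤ L i) (hud : (UD n L).Nonempty) :
    qnm n m * varsigma n m ^ (m - 1) ≤ rho n L :=
  stmt1_general n m hn L hud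
end

section
/- For every fixed integer m ≥ 1, the sequence (ξ_{n,m})_{n ≥ 2} converges to 1 as n → ∞. -/
open Finset Filter Topology

/-!
For lengths `a_i ≥ 1`, the word `v_i` of a code is determined by `v_j` whenever it is a prefix
of it, so among all codes with length distribution `L` at most a fraction `n^{-a_i} ≤ 1/n` have
`v_i` a prefix of `v_j`. Summing over the pairs `i ≠ j`, at least a fraction `1 - m²/n` of all
codes, and a fortiori of the uniquely decodable ones, are prefix codes. Hence
`1 - m²/n ≤ ξ_{n,m} ≤ 1` once `n ≥ m` (so that `ℒ_{n,m}` contains the all-ones distribution).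
-/

theorem IsPrefixCode.isUDCode {X : Type*} {m : ℕ} {v : Fin m → List X} (h : IsPrefixCode v) :
    IsUDCode v := by
  obtain ⟨-, hne, hpre⟩ := h
  suffices key : ∀ s t : List (Fin m), (s.map v).flatten = (t.map v).flatten → s = t from
    fun s t _ _ => key s t
  intro s
  induction s with
  | nil =>
    rintro (_ | ⟨b, t⟩) h
    · rfl
    · simp only [List.map_nil, List.flatten_nil, List.map_cons, List.flatten_cons] at h
      exact absurd (List.append_eq_nil_iff.mp h.symm).1 (hne b)
  | cons a s ih =>
    rintro (_ | ⟨b, t⟩) h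
    · simp only [List.map_nil, List.flatten_nil, List.map_cons, List.flatten_cons] at h
      exact absurd (List.append_eq_nil_iff.mp h).1 (hne a)
    · simp only [List.map_cons, List.flatten_cons] at h
      -- both `v a` and `v b` are prefixes of the same word, so one is a prefix of the other
      have hab : a = b := by
        by_contra hab
        rcases List.prefix_or_prefix_of_prefix ⟨_, h⟩ (List.prefix_append (v b) _) with h' | h'
        · exact hpre a b hab h'
        · exact hpre b a (Ne.symm hab) h'
      subst hab
      rw [ih t (List.append_cancel_left h)]

def words (n a : ℕ) : Finset (List (Fin n)) :=
  univ.image (List.ofFn : (Fin a → Fin n) → List (Fin n))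

theorem mem_words {n a : ℕ} {w : List (Fin n)} : w ∈ words n a ↔ w.length = a := by
  simp only [words, mem_image, mem_univ, true_and]
  constructor
  · rintro ⟨f, rfl⟩
    exact List.length_ofFn
  · rintro rfl
    exact ⟨w.get, List.ofFn_get w⟩

theorem card_words (n a : ℕ) : #(words n a) = n ^ a := by
  simp [words, card_image_of_injective _ List.ofFn_injective]

def codes (n : ℕ) {m : ℕ} (L : Fin m → ℕ) : Finset (Fin m → List (Fin n)) :=
  Fintype.piFinset fun i => words n (L i)

section Codes

variable {n m : ℕ} {L : Fin m → ℕ}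

theorem mem_codes {v : Fin m → List (Fin n)} : v ∈ codes n L ↔ ∀ i, (v i).length = L i := by
  simp only [codes, Fintype.mem_piFinset, mem_words]

theorem card_codes (n : ℕ) (L : Fin m → ℕ) : #(codes n L) = ∏ i, n ^ L i := by
  simp only [codes, Fintype.card_piFinset, card_words]

theorem pow_mul_card_codes_update_zero (i : Fin m) :
    n ^ L i * #(codes n (Function.update L i 0)) = #(codes n L) := by
  rw [card_codes, card_codes, Fintype.prod_eq_mul_prod_compl i, Fintype.prod_eq_mul_prod_compl i,
    Function.update_self, pow_zero, one_mul]
  congr 1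
  refine prod_congr rfl fun k hk => ?_
  rw [Function.update_of_ne (by simpa using hk)]

theorem pow_mul_card_isPrefix_le {i j : Fin m} (hij : i ≠ j) :
    n ^ L i * #{v ∈ codes n L | v i <+: v j} ≤ #(codes n L) := by
  rw [← pow_mul_card_codes_update_zero i]
  refine Nat.mul_le_mul_left _ (card_le_card_of_injOn (Function.update · i []) ?_ ?_)
  · intro v hv
    simp only [coe_filter, Set.mem_ofPred_eq, mem_coe, mem_codes] at hv ⊢
    intro k
    rcases eq_or_ne k i with rfl | hk
    · simp
    · simp [Function.update_of_ne hk, hv.1 k]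
  · intro v hv w hw hvw
    simp only [coe_filter, Set.mem_ofPred_eq, mem_codes] at hv hw
    have hj : v j = w j := by simpa [Function.update_of_ne hij.symm] using congrFun hvw j
    funext k
    rcases eq_or_ne k i with rfl | hk
    · rw [List.prefix_iff_eq_take.mp hv.2, List.prefix_iff_eq_take.mp hw.2, hj, hv.1, hw.1]
    · simpa [Function.update_of_ne hk] using congrFun hvw k

theorem mul_card_not_prefixFree_le (hL : ∀ i, 1 ≤ L i) :
    n * #{v ∈ codes n L | ∃ i j, i ≠ j ∧ v i <+: v j} ≤ m ^ 2 * #(codes n L) := by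
  have hsub : {v ∈ codes n L | ∃ i j, i ≠ j ∧ v i <+: v j} ⊆
      univ.offDiag.biUnion fun p : Fin m × Fin m => {v ∈ codes n L | v p.1 <+: v p.2} := by
    intro v hv
    obtain ⟨hv, i, j, hij, hpre⟩ := mem_filter.mp hv
    exact mem_biUnion.mpr ⟨(i, j), by simpa using hij, mem_filter.mpr ⟨hv, hpre⟩⟩
  calc n * #{v ∈ codes n L | ∃ i j, i ≠ j ∧ v i <+: v j}
      ≤ ∑ p ∈ univ.offDiag, n * #{v ∈ codes n L | v p.1 <+: v p.2} := by
        rw [← mul_sum]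
        exact Nat.mul_le_mul_left _ ((card_le_card hsub).trans card_biUnion_le)
    _ ≤ ∑ p ∈ (univ : Finset (Fin m)).offDiag, #(codes n L) := by
        refine sum_le_sum fun p hp => ?_
        have hp := (mem_offDiag.mp hp).2.2
        exact (Nat.mul_le_mul_right _ (Nat.le_self_pow (by have := hL p.1; omega) n)).trans
          (pow_mul_card_isPrefix_le hp)
    _ ≤ m ^ 2 * #(codes n L) := by
        rw [sum_const, smul_eq_mul, offDiag_card, card_univ, Fintype.card_fin]
        exact Nat.mul_le_mul_right _ (by rw [sq]; exact Nat.sub_le _ _)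

theorem PR_eq_filter (hL : ∀ i, 1 ≤ L i) :
    PR n L = ↑{v ∈ codes n L | ¬ ∃ i j, i ≠ j ∧ v i <+: v j} := by
  ext v
  simp only [PR, IsPrefixCode, coe_filter, Set.mem_ofPred_eq, mem_codes, not_exists, not_and]
  refine ⟨fun ⟨hlen, _, _, hpre⟩ => ⟨hlen, hpre⟩, fun ⟨hlen, hpre⟩ => ⟨hlen, ?_, ?_, hpre⟩⟩
  · intro i j hvij
    by_contra hij
    exact hpre i j hij (hvij ▸ List.prefix_refl _)
  · intro i hi
    have h0 := hlen i
    rw [hi, List.length_nil] at h0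
    have := hL i
    omega

theorem UD_subset_codes : UD n L ⊆ ↑(codes n L) :=
  fun _ hv => mem_codes.mpr hv.1

theorem PR_subset_UD : PR n L ⊆ UD n L :=
  fun _ ⟨hlen, hv⟩ => ⟨hlen, hv.isUDCode⟩

theorem UD_finite : (UD n L).Finite :=
  (codes n L).finite_toSet.subset UD_subset_codes

theorem rho_le_one (hUD : (UD n L).Nonempty) : rho n L ≤ 1 := by
  rw [rho, div_le_one (by exact_mod_cast (Set.ncard_pos UD_finite).mpr hUD)]
  exact_mod_cast Set.ncard_le_ncard PR_subset_UD UD_finite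

theorem one_sub_le_card_prefixFree_div (hn : 0 < n) (hL : ∀ i, 1 ≤ L i)
    (hC : 0 < #(codes n L)) :
    1 - (m : ℝ) ^ 2 / n ≤ #{v ∈ codes n L | ¬ ∃ i j, i ≠ j ∧ v i <+: v j} / #(codes n L) := by
  set C := codes n L
  set P := {v ∈ C | ¬ ∃ i j, i ≠ j ∧ v i <+: v j}
  have hsplit : #{v ∈ C | ∃ i j, i ≠ j ∧ v i <+: v j} + #P = #C :=
    card_filter_add_card_filter_not _
  have hbad : n * #{v ∈ C | ∃ i j, i ≠ j ∧ v i <+: v j} ≤ m ^ 2 * #C :=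
    mul_card_not_prefixFree_le hL
  have hcount : n * #C ≤ n * #P + m ^ 2 * #C := by
    nth_rewrite 1 [← hsplit]
    rw [mul_add, add_comm]
    exact Nat.add_le_add_left hbad _
  have hcount' : (n : ℝ) * #C ≤ n * #P + m ^ 2 * #C := by exact_mod_cast hcount
  rw [le_div_iff₀ (by exact_mod_cast hC), sub_mul, one_mul, sub_le_iff_le_add, div_mul_eq_mul_div,
    ← sub_le_iff_le_add', le_div_iff₀ (by exact_mod_cast hn)]
  linarith

theorem one_sub_le_rho (hn : 0 < n) (hL : ∀ i, 1 ≤ L i) (hUD : (UD n L).Nonempty) :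
    1 - (m : ℝ) ^ 2 / n ≤ rho n L := by
  have hUD_pos : 0 < (UD n L).ncard := (Set.ncard_pos UD_finite).mpr hUD
  have hUD_le : (UD n L).ncard ≤ #(codes n L) := by
    simpa using Set.ncard_le_ncard UD_subset_codes (codes n L).finite_toSet
  calc 1 - (m : ℝ) ^ 2 / n
      ≤ #{v ∈ codes n L | ¬ ∃ i j, i ≠ j ∧ v i <+: v j} / #(codes n L) :=
        one_sub_le_card_prefixFree_div hn hL (hUD_pos.trans_le hUD_le)
    _ ≤ rho n L := by
        rw [rho, PR_eq_filter hL, Set.ncard_coe_finset]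
        exact div_le_div_of_nonneg_left (Nat.cast_nonneg _) (by exact_mod_cast hUD_pos)
          (by exact_mod_cast hUD_le)

end Codes

theorem UD_one_nonempty {n m : ℕ} (hmn : m ≤ n) : (UD n fun _ : Fin m => 1).Nonempty := by
  refine ⟨fun i => [Fin.castLE hmn i], fun _ => rfl, IsPrefixCode.isUDCode ⟨?_, ?_, ?_⟩⟩
  · intro i j hij
    exact Fin.castLE_injective hmn (List.singleton_injective hij)
  · exact fun _ => List.cons_ne_nil _ _
  · intro i j hij hpre
    exact hij (Fin.castLE_injective hmn (List.singleton_injective (hpre.eq_of_length rfl)))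

theorem xi_mem_Icc {n m : ℕ} (hn : 0 < n) (hmn : m ≤ n) :
    xi n m ∈ Set.Icc (1 - (m : ℝ) ^ 2 / n) 1 := by
  have hmem : rho n (fun _ : Fin m => 1) ∈
      {r : ℝ | ∃ L : Fin m → ℕ, (∀ i, 1 ≤ L i) ∧ (UD n L).Nonempty ∧ r = rho n L} :=
    ⟨_, fun _ => le_rfl, UD_one_nonempty hmn, rfl⟩
  have hlower : 1 - (m : ℝ) ^ 2 / n ∈ lowerBounds
      {r : ℝ | ∃ L : Fin m → ℕ, (∀ i, 1 ≤ L i) ∧ (UD n L).Nonempty ∧ r = rho n L} := by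
    rintro r ⟨L, hL, hUD, rfl⟩
    exact one_sub_le_rho hn hL hUD
  exact ⟨le_csInf ⟨_, hmem⟩ hlower,
    csInf_le_of_le ⟨_, hlower⟩ hmem (rho_le_one (UD_one_nonempty hmn))⟩

theorem stmt4_general (m : ℕ) :
    Filter.Tendsto (fun n : ℕ => xi n m) Filter.atTop (𝓝 1) := by
  have hlower : Tendsto (fun n : ℕ => 1 - (m : ℝ) ^ 2 / n) atTop (𝓝 1) := by
    simpa using (tendsto_const_div_atTop_nhds_zero_nat ((m : ℝ) ^ 2)).const_sub 1
  have hxi : ∀ᶠ n : ℕ in atTop, xi n m ∈ Set.Icc (1 - (m : ℝ) ^ 2 / n) 1 := by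
    filter_upwards [eventually_ge_atTop (max m 1)] with n hn
    exact xi_mem_Icc (by omega) (le_of_max_le_left hn)
  exact tendsto_of_tendsto_of_tendsto_of_le_of_le' hlower tendsto_const_nhds
    (hxi.mono fun _ h => h.1) (hxi.mono fun _ h => h.2)

/-- Corollary 1: for every fixed `m ≥ 1`, `ξ_{n,m} → 1` as `n → ∞`. -/
theorem stmt4 (m : ℕ) (hm : 1 ≤ m) :
    Filter.Tendsto (fun n : ℕ => xi n m) Filter.atTop (𝓝 1) :=
  stmt4_general m
end

section
/- Let n ≥ 2 and let L be a length distribution of length m. Let ν_1 < ν_2 < … < ν_t be the distinct values of L and let r_i be the number of entries of L equal to ν_i. Define N_1 := n^{ν_1} and N_{i+1} := n^{ν_{i+1} − ν_i}(N_i − r_i) for 1 ≤ i < t. Then |PR_n(L)| = ∏_{i=1}^{t} binom(N_i, r_i) · r_i!. -/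
open Finset Filter Topology

/-!
Choose the code words level by level, from the shortest length upwards. Before level `i` is
filled, the admissible positions for its `r i` words are the words of length `ν i` that have
no code word as a prefix; there are `N i` of them whatever the earlier choices were, since the
`N i - r i` positions left free at level `i` each extend to `n ^ (ν (i + 1) - ν i)` admissible
positions at the next level. Placing the `r i` words injectively into `N i` positions can be
done in `N i choose r i * (r i)!` ways. The induction runs over codes all of whose words
extend one of a prescribed set `P` of free words of a common length `d`.
-/

open Function

section

variable {X ι : Type*}

def extendTo (P : Set (List X)) (d ℓ : ℕ) : Set (List X) :=
  {w | w.length = ℓ ∧ w.take d ∈ P}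

def prefixCodesBelow (P : Set (List X)) (d : ℕ) (L : ι → ℕ) : Set (ι → List X) :=
  {v | (∀ j, (v j).length = L j) ∧ (∀ j, (v j).take d ∈ P) ∧ Pairwise fun i j => ¬ v i <+: v j}

theorem isPrefixCode_iff {m : ℕ} {v : Fin m → List X} :
    IsPrefixCode v ↔ (∀ i, v i ≠ []) ∧ Pairwise fun i j => ¬ v i <+: v j := by
  refine ⟨fun h => ⟨h.2.1, h.2.2⟩, fun h => ⟨fun i j hij => ?_, h.1, h.2⟩⟩
  by_contra hne
  exact h.2 hne (hij ▸ List.prefix_refl _)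

theorem PR_eq_prefixCodesBelow {n m : ℕ} {L : Fin m → ℕ} (hL : ∀ i, 1 ≤ L i) :
    PR n L = prefixCodesBelow {[]} 0 L := by
  ext v
  simp only [PR, prefixCodesBelow, isPrefixCode_iff, Set.mem_ofPred_eq, List.take_zero,
    Set.mem_singleton_iff, implies_true, true_and]
  refine and_congr_right fun hv => and_iff_right_of_imp fun _ i hi => ?_
  simpa [hi, ← hv i] using hL i

instance finite_prefixCodesBelow [Finite X] [Finite ι] (P : Set (List X)) (d : ℕ) (L : ι → ℕ) :
    Finite (prefixCodesBelow P d L) :=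
  ((Set.Finite.pi' fun j => List.finite_length_eq X (L j)).subset fun _ hv => hv.1).to_subtype

theorem ncard_extendTo {P : Set (List X)} {d ℓ : ℕ} (hP : ∀ w ∈ P, w.length = d) (hdℓ : d ≤ ℓ) :
    (extendTo P d ℓ).ncard = P.ncard * Nat.card X ^ (ℓ - d) := by
  have e : extendTo P d ℓ ≃ P × List.Vector X (ℓ - d) :=
    { toFun w := (⟨w.1.take d, w.2.2⟩, ⟨w.1.drop d, by simp [w.2.1]⟩)
      invFun p := ⟨p.1.1 ++ p.2.1, by
        have hp := hP _ p.1.2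
        exact ⟨by simp [hp, p.2.2]; omega, by rw [List.take_left' hp]; exact p.1.2⟩⟩
      left_inv w := by simp
      right_inv := by
        rintro ⟨⟨a, ha⟩, ⟨b, hb⟩⟩
        simp [List.take_left' (hP a ha), List.drop_left' (hP a ha)] }
  rw [← Nat.card_coe_set_eq, Nat.card_congr e, Nat.card_prod, Nat.card_coe_set_eq,
    Nat.card_congr (Equiv.vectorEquivFin X _), Nat.card_fun, Nat.card_fin]

theorem prefixCodesBelow_extendTo {P : Set (List X)} {d ℓ : ℕ} {L : ι → ℕ} (hdℓ : d ≤ ℓ)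
    (hL : ∀ j, ℓ ≤ L j) : prefixCodesBelow (extendTo P d ℓ) ℓ L = prefixCodesBelow P d L := by
  ext v
  simp only [prefixCodesBelow, extendTo, Set.mem_ofPred_eq]
  refine and_congr_right fun hv => and_congr_left fun _ => forall_congr' fun j => ?_
  simp [List.take_take, hv j, hL j, hdℓ]

theorem mem_prefixCodesBelow_iff {P : Set (List X)} {ℓ : ℕ} {L : ι → ℕ}
    (hP : ∀ w ∈ P, w.length = ℓ) (hL : ∀ j, ℓ ≤ L j) {v : ι → List X} :
    v ∈ prefixCodesBelow P ℓ L ↔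
      ((∀ s : {j // L j = ℓ}, v s ∈ P) ∧ Injective fun s : {j // L j = ℓ} => v s) ∧
        (fun j : {j // ¬L j = ℓ} => v j) ∈
          prefixCodesBelow (P \ Set.range fun s : {j // L j = ℓ} => v s) ℓ
            (fun j : {j // ¬L j = ℓ} => L j) := by
  constructor
  · rintro ⟨hlen, htake, hpre⟩
    have hv (s : {j // L j = ℓ}) : v s ∈ P := by
      simpa [List.take_of_length_le, hlen, s.2] using htake s
    refine ⟨⟨hv, fun s s' h => Subtype.ext ?_⟩, fun j => hlen j, fun j => ⟨htake j, ?_⟩,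
      fun i j hij => hpre (Subtype.coe_injective.ne hij)⟩
    · by_contra hne
      exact hpre hne ((show v s = v s' from h) ▸ List.prefix_refl _)
    · rintro ⟨s, hs⟩
      exact hpre (fun e => j.2 (by rw [← e]; exact s.2)) (hs ▸ List.take_prefix _ _)
  · rintro ⟨⟨hv, hinj⟩, hlen, htake, hpre⟩
    have hlen' (s : {j // L j = ℓ}) : (v s).length = ℓ := hP _ (hv s)
    refine ⟨fun j => ?_, fun j => ?_, fun i j hij hij' => ?_⟩
    · by_cases h : L j = ℓ
      · rw [hlen' ⟨j, h⟩, h]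
      · exact hlen ⟨j, h⟩
    · by_cases h : L j = ℓ
      · rw [List.take_of_length_le (hlen' ⟨j, h⟩).le]
        exact hv ⟨j, h⟩
      · exact (htake ⟨j, h⟩).1
    · by_cases hi : L i = ℓ <;> by_cases hj : L j = ℓ
      · refine hij (congrArg Subtype.val (@hinj ⟨i, hi⟩ ⟨j, hj⟩ ?_))
        exact hij'.eq_of_length ((hlen' ⟨i, hi⟩).trans (hlen' ⟨j, hj⟩).symm)
      · have hvi := List.prefix_iff_eq_take.1 hij'
        rw [show (v i).length = ℓ from hlen' ⟨i, hi⟩] at hvi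
        exact (htake ⟨j, hj⟩).2 ⟨⟨i, hi⟩, hvi⟩
      · have := hij'.length_le
        rw [hlen ⟨i, hi⟩, hlen' ⟨j, hj⟩] at this
        exact hi (le_antisymm this (hL i))
      · exact @hpre ⟨i, hi⟩ ⟨j, hj⟩ (fun e => hij (congrArg Subtype.val e)) hij'

theorem ncard_prefixCodesBelow_eq_card_sigma {P : Set (List X)} {ℓ : ℕ} {L : ι → ℕ}
    (hP : ∀ w ∈ P, w.length = ℓ) (hL : ∀ j, ℓ ≤ L j) :
    (prefixCodesBelow P ℓ L).ncard =
      Nat.card (Σ f : {j // L j = ℓ} ↪ P,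
        prefixCodesBelow (P \ Set.range fun s => (f s : List X)) ℓ
          (fun j : {j // ¬L j = ℓ} => L j)) := by
  classical
  rw [← Nat.card_coe_set_eq]
  refine Nat.card_congr <|
    ((Equiv.piEquivPiSubtypeProd (L · = ℓ) fun _ => List X).subtypeEquiv
      (q := fun p => ((∀ s, p.1 s ∈ P) ∧ Injective p.1) ∧
        p.2 ∈ prefixCodesBelow (P \ Set.range p.1) ℓ (fun j : {j // ¬L j = ℓ} => L j))
      fun v => mem_prefixCodesBelow_iff hP hL).trans ?_
  exact
    { toFun q := ⟨⟨fun s => ⟨q.1.1 s, q.2.1.1 s⟩, fun s s' h => q.2.1.2 (congrArg Subtype.val h)⟩,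
        ⟨q.1.2, q.2.2⟩⟩
      invFun x := ⟨(fun s => x.1 s, x.2.1),
        ⟨fun s => (x.1 s).2, fun s s' h => x.1.injective (Subtype.ext h)⟩, x.2.2⟩
      left_inv _ := rfl
      right_inv _ := rfl }

theorem ncard_prefixCodesBelow_eq_descFactorial_mul [Finite X] [Fintype ι] {P : Set (List X)}
    {d ℓ : ℕ} {L : ι → ℕ} (hP : ∀ w ∈ P, w.length = d) (hdℓ : d ≤ ℓ) (hL : ∀ j, ℓ ≤ L j) (K : ℕ)
    (hK : ∀ Q : Set (List X), (∀ w ∈ Q, w.length = ℓ) →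
      Q.ncard = P.ncard * Nat.card X ^ (ℓ - d) - Nat.card {j // L j = ℓ} →
        (prefixCodesBelow Q ℓ fun j : {j // ¬L j = ℓ} => L j).ncard = K) :
    (prefixCodesBelow P d L).ncard =
      (P.ncard * Nat.card X ^ (ℓ - d)).descFactorial (Nat.card {j // L j = ℓ}) * K := by
  classical
  set P₁ := extendTo P d ℓ
  have hP₁ : ∀ w ∈ P₁, w.length = ℓ := fun w hw => hw.1
  have : Fintype P₁ := ((List.finite_length_eq X ℓ).subset hP₁).fintype
  have hfiber (f : {j // L j = ℓ} ↪ P₁) :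
      (prefixCodesBelow (P₁ \ Set.range fun s => (f s : List X)) ℓ
        fun j : {j // ¬L j = ℓ} => L j).ncard = K := by
    have hsub : (Set.range fun s => (f s : List X)) ⊆ P₁ := by
      rintro _ ⟨s, rfl⟩
      exact (f s).2
    refine hK _ (fun w hw => hP₁ w (Set.sdiff_subset hw)) ?_
    rw [Set.ncard_sdiff hsub, ncard_extendTo hP hdℓ, Set.ncard_range_of_injective
      (f := fun s => (f s : List X)) (Subtype.val_injective.comp f.injective)]
  rw [← prefixCodesBelow_extendTo hdℓ hL, ncard_prefixCodesBelow_eq_card_sigma hP₁ hL,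
    Nat.card_sigma]
  simp only [Nat.card_coe_set_eq, hfiber, Finset.sum_const, Finset.card_univ, smul_eq_mul]
  rw [Fintype.card_embedding_eq, ← Nat.card_eq_fintype_card, ← Nat.card_eq_fintype_card,
    Nat.card_coe_set_eq, ncard_extendTo hP hdℓ]

theorem prod_Icc_one_succ {M : Type*} [CommMonoid M] (f : ℕ → M) (t : ℕ) :
    ∏ i ∈ Icc 1 (t + 1), f i = f 1 * ∏ i ∈ Icc 1 t, f (i + 1) := by
  rw [← insert_Icc_add_one_left_eq_Icc (by omega), prod_insert (by simp), ← map_add_right_Icc,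
    prod_map]
  rfl

open Nat in
theorem ncard_prefixCodesBelow [Finite X] (t : ℕ) [Fintype ι] (L : ι → ℕ)
    (P : Set (List X)) (d : ℕ) (ν r N : ℕ → ℕ)
    (hP : ∀ w ∈ P, w.length = d) (hd : 1 ≤ t → d ≤ ν 1)
    (hmono : ∀ i j, 1 ≤ i → i < j → j ≤ t → ν i < ν j)
    (hval : ∀ j, ∃ i, 1 ≤ i ∧ i ≤ t ∧ L j = ν i)
    (hr : ∀ i, 1 ≤ i → i ≤ t → r i = (univ.filter fun j => L j = ν i).card)
    (hN1 : 1 ≤ t → N 1 = P.ncard * Nat.card X ^ (ν 1 - d))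
    (hN : ∀ i, 1 ≤ i → i < t → N (i + 1) = Nat.card X ^ (ν (i + 1) - ν i) * (N i - r i)) :
    (prefixCodesBelow P d L).ncard = ∏ i ∈ Icc 1 t, (N i).choose (r i) * (r i)! := by
  induction t generalizing ι L P d ν r N with
  | zero =>
    have : IsEmpty ι := ⟨fun j => by obtain ⟨i, h1, h2, -⟩ := hval j; omega⟩
    have hS : prefixCodesBelow P d L = Set.univ := Set.eq_univ_of_forall fun _ =>
      ⟨isEmptyElim, isEmptyElim, fun i => isEmptyElim i⟩
    simp [hS]
  | succ t ih =>
    classical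
    have hL (j : ι) : ν 1 ≤ L j := by
      obtain ⟨i, h1, h2, h3⟩ := hval j
      rcases h1.eq_or_lt with rfl | h1
      · exact h3.ge
      · exact h3 ▸ (hmono 1 i le_rfl h1 h2).le
    have hr1 : r 1 = Nat.card {j // L j = ν 1} := by
      rw [hr 1 le_rfl (by omega), Nat.card_eq_fintype_card, Fintype.card_subtype]
    rw [ncard_prefixCodesBelow_eq_descFactorial_mul hP (hd (by omega)) hL _ fun Q hQ hQcard => ?_,
      ← hN1 (by omega), ← hr1, descFactorial_eq_factorial_mul_choose, prod_Icc_one_succ,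
      mul_comm (r 1)!, mul_assoc]
    refine ih (fun j : {j // ¬L j = ν 1} => L j) Q (ν 1) (fun i => ν (i + 1)) (fun i => r (i + 1))
      (fun i => N (i + 1)) hQ (fun _ => (hmono 1 2 le_rfl one_lt_two (by omega)).le)
      (fun i j h1 h2 h3 => hmono (i + 1) (j + 1) (by omega) (by omega) (by omega))
      (fun j => ?_) (fun i h1 h2 => ?_) (fun _ => ?_)
      (fun i h1 h2 => hN (i + 1) (by omega) (by omega))
    · obtain ⟨i, h1, h2, h3⟩ := hval j
      have hi : i ≠ 1 := fun e => j.2 (e ▸ h3)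
      exact ⟨i - 1, by omega, by omega, by rw [h3, Nat.sub_add_cancel h1]⟩
    · have hne : ν 1 < ν (i + 1) := hmono 1 (i + 1) le_rfl (by omega) (by omega)
      rw [hr (i + 1) (by omega) (by omega), ← Fintype.card_subtype, ← Fintype.card_subtype]
      exact Fintype.card_congr (Equiv.subtypeSubtypeEquivSubtype fun h => by omega).symm
    · rw [hN 1 le_rfl (by omega), hQcard, hN1 (by omega), hr1, mul_comm]

end

theorem stmt5_general (n : ℕ) (m t : ℕ) (L : Fin m → ℕ) (hL : ∀ i, 1 ≤ L i)
    (ν r N : ℕ → ℕ)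
    (hmono : ∀ i j, 1 ≤ i → i < j → j ≤ t → ν i < ν j)
    (hval' : ∀ j, ∃ i, 1 ≤ i ∧ i ≤ t ∧ L j = ν i)
    (hr : ∀ i, 1 ≤ i → i ≤ t → r i = (Finset.univ.filter fun j => L j = ν i).card)
    (hN1 : N 1 = n ^ ν 1)
    (hN : ∀ i, 1 ≤ i → i < t → N (i + 1) = n ^ (ν (i + 1) - ν i) * (N i - r i)) :
    (PR n L).ncard = ∏ i ∈ Finset.Icc 1 t, Nat.choose (N i) (r i) * Nat.factorial (r i) := by
  rw [PR_eq_prefixCodesBelow hL]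
  exact ncard_prefixCodesBelow t L {[]} 0 ν r N (by simp) (fun _ => Nat.zero_le _) hmono hval' hr
    (fun _ => by simp [hN1]) (by simpa using hN)

/-- The Kraft-type counting formula for `|PR_n(L)|`: if `ν 1 < … < ν t` are the distinct
values of `L`, `r i` is the number of entries of `L` equal to `ν i`, `N 1 = n^{ν 1}` and
`N (i+1) = n^{ν(i+1) - ν i}·(N i - r i)`, then `|PR_n(L)| = ∏_{i=1}^t C(N i, r i)·(r i)!`. -/
theorem stmt5 (n : ℕ) (hn : 2 ≤ n) (m t : ℕ) (L : Fin m → ℕ) (hL : ∀ i, 1 ≤ L i)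
    (ν r N : ℕ → ℕ)
    (hmono : ∀ i j, 1 ≤ i → i < j → j ≤ t → ν i < ν j)
    (hval : ∀ i, 1 ≤ i → i ≤ t → ∃ j, L j = ν i)
    (hval' : ∀ j, ∃ i, 1 ≤ i ∧ i ≤ t ∧ L j = ν i)
    (hr : ∀ i, 1 ≤ i → i ≤ t → r i = (Finset.univ.filter fun j => L j = ν i).card)
    (hN1 : N 1 = n ^ ν 1)
    (hN : ∀ i, 1 ≤ i → i < t → N (i + 1) = n ^ (ν (i + 1) - ν i) * (N i - r i)) :
    (PR n L).ncard = ∏ i ∈ Finset.Icc 1 t, Nat.choose (N i) (r i) * Nat.factorial (r i) :=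
  stmt5_general n m t L hL ν r N hmono hval' hr hN1 hN
end

section
/- For every fixed integer n ≥ 2, the sequence (ξ_{n,m})_{m ≥ 1} converges to 0 as m → ∞. -/
open Finset Filter Topology

/-!
Take the length distribution `(1, ℓ, …, ℓ)` with `M` words of length `ℓ`. A prefix code has
`v₀ = [c]` for some letter `c`, and no other word may start with `c`; hence there are at most
`n ((n - 1) n^(ℓ-1))^M` prefix codes.

For uniquely decodable codes fix letters `x ≠ y`, put `v₀ = [x]`, and let the other words either
not start with `x` or start with `x y`; there are `g = (n - 1) n^(ℓ-1) + n^(ℓ-2)` such words. If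
the words are distinct and none of them equals `x` followed by another word with its last letter
removed, then the first code word of a message is determined: if both `[x]` and a word `x :: u`
began the message, `u` would begin with `y` and also with `x` or with the first `ℓ - 1` letters of
a word. Each of the `M²` excluded coincidences leaves at most two choices for one word, so once
`g ≫ M²` at least half of the `g^M` tuples are uniquely decodable codes. With `p = (n - 1) n`
this gives `ρ ≤ 2 n (p / (p + 1))^M → 0`.
-/

namespace IsUDCode

variable {X : Type*} {m : ℕ} {v : Fin m → List X}

theorem of_head_determined (hne : ∀ i, v i ≠ [])
    (hhead : ∀ i j (s t : List (Fin m)),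
      v i ++ (s.map v).flatten = v j ++ (t.map v).flatten → i = j) :
    IsUDCode v := by
  suffices h : ∀ s t : List (Fin m), (s.map v).flatten = (t.map v).flatten → s = t from
    fun s t _ _ => h s t
  intro s
  induction s with
  | nil =>
    rintro (_ | ⟨j, t⟩) h
    · rfl
    · simp only [List.map_nil, List.flatten_nil, List.map_cons, List.flatten_cons] at h
      exact absurd (List.append_eq_nil_iff.mp h.symm).1 (hne j)
  | cons i s ih =>
    rintro (_ | ⟨j, t⟩) h
    · simp only [List.map_nil, List.flatten_nil, List.map_cons, List.flatten_cons] at h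
      exact absurd (List.append_eq_nil_iff.mp h).1 (hne i)
    · simp only [List.map_cons, List.flatten_cons] at h
      obtain rfl := hhead i j s t h
      rw [ih t (List.append_cancel_left h)]

end IsUDCode

section CodeWithSingleLetterWord

variable {X : Type*} {M k : ℕ} {x y : X} {w : Fin M → List X}

theorem cons_flatten_ne_append (hxy : x ≠ y) (hlen : ∀ i, (w i).length = k + 1)
    (hy : ∀ i u, w i = x :: u → u.head? = some y)
    (hovl : ∀ i j, w i ≠ x :: (w j).dropLast) (j : Fin M) (s : List (Fin (M + 1)))
    (F : List X) :
    x :: (s.map (Fin.cons [x] w : Fin (M + 1) → List X)).flatten ≠ w j ++ F := by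
  intro h
  obtain ⟨u, hu⟩ : ∃ u, w j = x :: u := by
    rcases hwj : w j with _ | ⟨a, u⟩
    · simpa [hwj] using hlen j
    · rw [hwj, List.cons_append, List.cons.injEq] at h
      exact ⟨u, by rw [h.1]⟩
  obtain ⟨r, rfl⟩ : ∃ r, u = y :: r := by
    have := hy j u hu
    rcases u with _ | ⟨b, r⟩
    · simp at this
    · simp only [List.head?_cons, Option.some.injEq] at this
      exact ⟨r, by rw [this]⟩
  replace h := (List.cons.inj (h.trans (by rw [hu, List.cons_append]))).2
  have hr : r.length + 1 = k := by simpa [hu] using hlen j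
  rcases s with _ | ⟨i, s⟩
  · simp at h
  · induction i using Fin.cases with
    | zero =>
      simp only [List.map_cons, List.flatten_cons, Fin.cons_zero,
        List.cons_append, List.cons.injEq] at h
      exact hxy h.1
    | succ i =>
      simp only [List.map_cons, List.flatten_cons, Fin.cons_succ] at h
      have hdrop : (w i).dropLast = y :: r := by
        rw [List.dropLast_eq_take, hlen i, Nat.add_sub_cancel,
          ← List.take_append_of_le_length (l₂ := (s.map _).flatten) (by rw [hlen i]; omega), h,
          List.take_append_of_le_length (by simp [hr]), List.take_of_length_le (by simp [hr])]
      exact hovl j i (by rw [hu, hdrop])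

theorem isUDCode_cons_singleton (hxy : x ≠ y) (hlen : ∀ i, (w i).length = k + 1)
    (hy : ∀ i u, w i = x :: u → u.head? = some y) (hinj : Function.Injective w)
    (hovl : ∀ i j, w i ≠ x :: (w j).dropLast) :
    IsUDCode (Fin.cons [x] w : Fin (M + 1) → List X) := by
  refine IsUDCode.of_head_determined (fun i => ?_) (fun i j s t h => ?_)
  · induction i using Fin.cases with
    | zero => simp
    | succ i => simp [← List.length_eq_zero_iff, hlen i]
  · induction i using Fin.cases with
    | zero =>
      induction j using Fin.cases with
      | zero => rfl
      | succ j => exact absurd h (cons_flatten_ne_append hxy hlen hy hovl j s _)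
    | succ i =>
      induction j using Fin.cases with
      | zero => exact absurd h.symm (cons_flatten_ne_append hxy hlen hy hovl i t _)
      | succ j =>
        simp only [Fin.cons_succ] at h
        rw [hinj (List.append_inj h (by rw [hlen, hlen])).1]

end CodeWithSingleLetterWord

section Words

variable {α : Type*} [Fintype α]

def wordsOfLength (α : Type*) [Fintype α] (k : ℕ) : Finset (List α) :=
  (univ : Finset (List.Vector α k)).map ⟨List.Vector.toList, List.Vector.toList_injective⟩

@[simp]
theorem mem_wordsOfLength {k : ℕ} {w : List α} : w ∈ wordsOfLength α k ↔ w.length = k := by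
  simp only [wordsOfLength, Finset.mem_map, mem_univ, true_and, Function.Embedding.coeFn_mk]
  exact ⟨fun ⟨v, hv⟩ => hv ▸ v.toList_length, fun h => ⟨⟨w, h⟩, rfl⟩⟩

theorem card_wordsOfLength (k : ℕ) : #(wordsOfLength α k) = Fintype.card α ^ k := by
  rw [wordsOfLength, card_map, card_univ, card_vector]

variable [DecidableEq α]

def wordsHeadNe (c : α) (k : ℕ) : Finset (List α) :=
  ((univ.erase c) ×ˢ wordsOfLength α k).image fun p => p.1 :: p.2

theorem mem_wordsHeadNe {c : α} {k : ℕ} {w : List α} :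
    w ∈ wordsHeadNe c k ↔ w.length = k + 1 ∧ w.head? ≠ some c := by
  rcases w with _ | ⟨d, u⟩ <;> simp [wordsHeadNe, and_comm]

theorem card_wordsHeadNe (c : α) (k : ℕ) :
    #(wordsHeadNe c k) = (Fintype.card α - 1) * Fintype.card α ^ k := by
  rw [wordsHeadNe, card_image_of_injective _ fun p q h => Prod.ext (List.cons.inj h).1
    (List.cons.inj h).2, card_product, card_erase_of_mem (mem_univ c), card_univ,
    card_wordsOfLength]

def wordsHeadNeOrPrefix (x y : α) (k : ℕ) : Finset (List α) :=
  wordsHeadNe x (k + 1) ∪ (wordsOfLength α k).image fun u => x :: y :: u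

theorem length_of_mem_wordsHeadNeOrPrefix {x y : α} {k : ℕ} {w : List α}
    (hw : w ∈ wordsHeadNeOrPrefix x y k) : w.length = k + 2 := by
  rcases mem_union.mp hw with hw | hw
  · exact (mem_wordsHeadNe.mp hw).1
  · obtain ⟨u, hu, rfl⟩ := mem_image.mp hw
    simpa using hu

theorem head_tail_of_mem_wordsHeadNeOrPrefix {x y : α} {k : ℕ} {u : List α}
    (hw : x :: u ∈ wordsHeadNeOrPrefix x y k) : u.head? = some y := by
  rcases mem_union.mp hw with hw | hw
  · simp [mem_wordsHeadNe] at hw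
  · obtain ⟨u, -, hu⟩ := mem_image.mp hw
    simp [← (List.cons.inj hu).2]

theorem ne_cons_dropLast_of_mem_wordsHeadNeOrPrefix {x y : α} (hxy : x ≠ y) {k : ℕ}
    {w : List α} (hw : w ∈ wordsHeadNeOrPrefix x y k) : w ≠ x :: w.dropLast := by
  intro h
  have hy := head_tail_of_mem_wordsHeadNeOrPrefix (h ▸ hw)
  have hlen := length_of_mem_wordsHeadNeOrPrefix hw
  rcases w with _ | ⟨a, _ | ⟨b, r⟩⟩
  · simp at hlen
  · simp at hlen
  · simp only [List.dropLast_cons_cons, List.cons.injEq, List.head?_cons,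
      Option.some.injEq] at h hy
    exact hxy (h.1.symm.trans hy)

theorem card_wordsHeadNeOrPrefix {x : α} (y : α) (k : ℕ) :
    #(wordsHeadNeOrPrefix x y k) =
      (Fintype.card α - 1) * Fintype.card α ^ (k + 1) + Fintype.card α ^ k := by
  rw [wordsHeadNeOrPrefix, card_union_of_disjoint, card_wordsHeadNe,
    card_image_of_injective _ fun u v h => by simpa using h, card_wordsOfLength]
  refine disjoint_left.mpr fun w hw hw' => ?_
  obtain ⟨u, -, rfl⟩ := mem_image.mp hw'
  simp [mem_wordsHeadNe] at hw

end Words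

section PiFinset

open Fintype

variable {ι β : Type*} [DecidableEq ι] [Fintype ι]

theorem card_piFinset_update_singleton_mul (S : ι → Finset β) (i : ι) (d : β) :
    #(piFinset (Function.update S i {d})) * #(S i) = #(piFinset S) := by
  simp_rw [card_piFinset, Function.apply_update (fun _ => card)]
  rw [prod_update_of_mem (mem_univ i), card_singleton, one_mul, sdiff_singleton_eq_erase,
    prod_erase_mul _ _ (mem_univ i)]

variable [DecidableEq β]

theorem card_filter_apply_mem_mul_le (S : ι → Finset β) {i j : ι} (hij : i ≠ j)
    (f : β → Finset β) {c : ℕ} (hf : ∀ b, #(f b) ≤ c) :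
    #((piFinset S).filter fun w => w i ∈ f (w j)) * #(S i) ≤ c * #(piFinset S) := by
  obtain hS | ⟨d, -⟩ := (S i).eq_empty_or_nonempty
  · simp [hS]
  set U := piFinset (Function.update S i {d})
  have hsub : (piFinset S).filter (fun w => w i ∈ f (w j)) ⊆
      U.biUnion fun u => (f (u j)).image (Function.update u i) := by
    intro w hw
    rw [mem_filter, mem_piFinset] at hw
    refine mem_biUnion.mpr ⟨Function.update w i d, ?_, mem_image.mpr ⟨w i, ?_, by simp⟩⟩
    · refine mem_piFinset.mpr fun l => ?_
      rcases eq_or_ne l i with rfl | hl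
      · simp
      · simp [Function.update_of_ne hl, hw.1 l]
    · rw [Function.update_of_ne hij.symm]
      exact hw.2
  calc #((piFinset S).filter fun w => w i ∈ f (w j)) * #(S i)
      ≤ (∑ u ∈ U, #((f (u j)).image (Function.update u i))) * #(S i) :=
        Nat.mul_le_mul_right _ ((card_le_card hsub).trans card_biUnion_le)
    _ ≤ (#U * c) * #(S i) := by
        gcongr
        exact sum_le_card_nsmul _ _ c fun u _ => card_image_le.trans (hf _)
    _ = c * #(piFinset S) := by
        rw [← card_piFinset_update_singleton_mul S i d]
        ring

theorem exists_half_subset_piFinset_apply_notMem (s : Finset β) (f : β → Finset β) {c : ℕ}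
    (hf : ∀ b, #(f b) ≤ c) (hs : 2 * c * card ι ^ 2 < #s) :
    ∃ H ⊆ piFinset fun _ : ι => s, (∀ w ∈ H, ∀ i j, i ≠ j → w i ∉ f (w j)) ∧
      #(piFinset fun _ : ι => s) ≤ 2 * #H := by
  set T := piFinset fun _ : ι => s
  set H := T.filter fun w => ∀ i j, i ≠ j → w i ∉ f (w j)
  refine ⟨H, filter_subset _ _, fun w hw => (mem_filter.mp hw).2, ?_⟩
  set Bad := fun p : ι × ι => T.filter fun w => w p.1 ∈ f (w p.2)
  have hcover : T ⊆ H ∪ univ.offDiag.biUnion Bad := by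
    intro w hw
    by_cases hwH : w ∈ H
    · exact mem_union_left _ hwH
    · obtain ⟨i, j, hij, hw'⟩ : ∃ i j, i ≠ j ∧ w i ∈ f (w j) := by
        simpa [H, hw] using hwH
      exact mem_union_right _
        (mem_biUnion.mpr ⟨(i, j), by simpa using hij, mem_filter.mpr ⟨hw, hw'⟩⟩)
  have hoff : #(univ : Finset ι).offDiag ≤ card ι ^ 2 := by
    rw [offDiag_card, card_univ, sq]
    exact Nat.sub_le _ _
  have key : #T * #s ≤ #H * #s + card ι ^ 2 * (c * #T) :=
    calc #T * #s ≤ (#H + ∑ p ∈ univ.offDiag, #(Bad p)) * #s := by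
          gcongr
          exact (card_le_card hcover).trans (card_union_le _ _ |>.trans
            (Nat.add_le_add_left card_biUnion_le _))
      _ = #H * #s + ∑ p ∈ univ.offDiag, #(Bad p) * #s := by rw [add_mul, sum_mul]
      _ ≤ #H * #s + ∑ _p ∈ univ.offDiag, c * #T := by
          refine Nat.add_le_add_left (sum_le_sum fun p hp => ?_) _
          exact card_filter_apply_mem_mul_le _ (mem_offDiag.mp hp).2.2 f hf
      _ ≤ #H * #s + card ι ^ 2 * (c * #T) := by
          rw [sum_const, smul_eq_mul]
          gcongr
  nlinarith

end PiFinset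

section LengthDistribution

variable {n : ℕ}

theorem finite_UD {m : ℕ} (L : Fin m → ℕ) : (UD n L).Finite :=
  (Fintype.piFinset fun i => wordsOfLength (Fin n) (L i)).finite_toSet.subset fun _ hv =>
    Fintype.mem_piFinset.mpr fun i => mem_wordsOfLength.mpr (hv.1 i)

theorem ncard_PR_cons_le (k M : ℕ) :
    (PR n (Fin.cons 1 fun _ : Fin M => k + 1 : Fin (M + 1) → ℕ)).ncard ≤
      n * ((n - 1) * n ^ k) ^ M := by
  set P := univ.biUnion fun c : Fin n =>
    (Fintype.piFinset fun _ : Fin M => wordsHeadNe c k).image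
      (Fin.cons (α := fun _ => List (Fin n)) [c])
  have hsub : PR n (Fin.cons 1 fun _ : Fin M => k + 1 : Fin (M + 1) → ℕ) ⊆ ↑P := by
    rintro v ⟨hlen, -, -, hpre⟩
    obtain ⟨c, hc⟩ := List.length_eq_one_iff.mp (by simpa using hlen 0)
    refine mem_biUnion.mpr ⟨c, mem_univ _, mem_image.mpr ⟨Fin.tail v, Fintype.mem_piFinset.mpr
      fun i => mem_wordsHeadNe.mpr ⟨by simpa [Fin.tail] using hlen i.succ, ?_⟩, ?_⟩⟩
    · intro hhead
      exact hpre 0 i.succ (Fin.succ_ne_zero i).symm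
        (hc ▸ List.singleton_prefix_iff_head?_eq_some.mpr hhead)
    · rw [← hc, Fin.cons_self_tail]
  calc _ ≤ #P := by simpa using Set.ncard_le_ncard hsub
    _ ≤ ∑ c : Fin n, ((n - 1) * n ^ k) ^ M := card_biUnion_le.trans <| sum_le_sum fun c _ =>
        card_image_le.trans (by simp [Fintype.card_piFinset, card_wordsHeadNe])
    _ = n * ((n - 1) * n ^ k) ^ M := by simp

theorem pow_le_two_mul_ncard_UD_cons (hn : 2 ≤ n) {k M : ℕ} (hM : 4 * M ^ 2 < n ^ k) :
    ((n - 1) * n ^ (k + 1) + n ^ k) ^ M ≤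
      2 * (UD n (Fin.cons 1 fun _ : Fin M => k + 2 : Fin (M + 1) → ℕ)).ncard := by
  set x : Fin n := ⟨0, by omega⟩
  set y : Fin n := ⟨1, by omega⟩
  have hxy : x ≠ y := by simp [x, y, Fin.ext_iff]
  set G := wordsHeadNeOrPrefix x y k
  set f : List (Fin n) → Finset (List (Fin n)) := fun b => {b, x :: b.dropLast}
  have hG : #G = (n - 1) * n ^ (k + 1) + n ^ k := by
    simpa using card_wordsHeadNeOrPrefix (x := x) y k
  obtain ⟨H, hHG, hHf, hTH⟩ := exists_half_subset_piFinset_apply_notMem (ι := Fin M) G f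
    (fun _ => card_le_two) (by simp only [Fintype.card_fin, hG]; omega)
  rw [Fintype.card_piFinset_const] at hTH
  have hHUD : ↑(H.image (Fin.cons (α := fun _ => List (Fin n)) [x])) ⊆
      UD n (Fin.cons 1 fun _ : Fin M => k + 2) := by
    intro v hv
    obtain ⟨w, hw, rfl⟩ := mem_image.mp hv
    have hwG := Fintype.mem_piFinset.mp (hHG hw)
    have hwH := hHf w hw
    have hlen i : (w i).length = k + 2 := length_of_mem_wordsHeadNeOrPrefix (hwG i)
    refine ⟨fun i => ?_, isUDCode_cons_singleton hxy hlen
      (fun i u hu => head_tail_of_mem_wordsHeadNeOrPrefix (hu ▸ hwG i))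
      (fun i j hij => by_contra fun hne => hwH i j hne (by simp [f, hij])) fun i j => ?_⟩
    · induction i using Fin.cases with
      | zero => simp
      | succ i => simpa using hlen i
    · rcases eq_or_ne i j with rfl | hij
      · exact ne_cons_dropLast_of_mem_wordsHeadNeOrPrefix hxy (hwG i)
      · exact fun h => hwH i j hij (by simp [f, h])
  calc _ = #G ^ M := by rw [hG]
    _ ≤ 2 * #H := hTH
    _ = 2 * #(H.image (Fin.cons (α := fun _ => List (Fin n)) [x])) := by
        rw [card_image_of_injective _ (Fin.cons_right_injective _)]
    _ ≤ _ := by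
        rw [← Set.ncard_coe_finset]
        exact Nat.mul_le_mul_left 2 (Set.ncard_le_ncard hHUD (finite_UD _))

end LengthDistribution

theorem rho_nonneg (n : ℕ) {m : ℕ} (L : Fin m → ℕ) : 0 ≤ rho n L := by
  unfold rho
  positivity

theorem xi_nonneg (n m : ℕ) : 0 ≤ xi n m :=
  Real.sInf_nonneg fun _ ⟨L, _, _, hr⟩ => hr ▸ rho_nonneg n L

theorem xi_le_rho {n m : ℕ} {L : Fin m → ℕ} (hL : ∀ i, 1 ≤ L i)
    (hUD : (UD n L).Nonempty) :
    xi n m ≤ rho n L :=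
  csInf_le ⟨0, fun _ ⟨L, _, _, hr⟩ => hr ▸ rho_nonneg n L⟩ ⟨L, hL, hUD, rfl⟩

theorem exists_rho_le {n : ℕ} (hn : 2 ≤ n) (M : ℕ) :
    ∃ L : Fin (M + 1) → ℕ, (∀ i, 1 ≤ L i) ∧ (UD n L).Nonempty ∧
      rho n L ≤ 2 * n * (((n - 1) * n : ℕ) / (((n - 1) * n : ℕ) + 1) : ℝ) ^ M := by
  set k := 2 * M + 2
  set L : Fin (M + 1) → ℕ := Fin.cons 1 fun _ => k + 2
  set p := (n - 1) * n
  have hM : 4 * M ^ 2 < n ^ k :=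
    calc 4 * M ^ 2 < 4 * (2 ^ M) ^ 2 := by
          gcongr
          exact Nat.lt_two_pow_self
      _ = 2 ^ k := by ring
      _ ≤ n ^ k := Nat.pow_le_pow_left hn k
  have hUD := pow_le_two_mul_ncard_UD_cons hn hM
  have hPR := ncard_PR_cons_le (n := n) (k + 1) M
  have hUD' : ((p + 1 : ℝ) * n ^ k) ^ M ≤ 2 * (UD n L).ncard := by
    have : (n - 1) * n ^ (k + 1) + n ^ k = (p + 1) * n ^ k := by ring
    exact_mod_cast this ▸ hUD
  have hPR' : ((PR n L).ncard : ℝ) ≤ n * (p * n ^ k) ^ M := by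
    have : (n - 1) * n ^ (k + 1) = p * n ^ k := by ring
    exact_mod_cast this ▸ hPR
  have hpos : (0 : ℝ) < (UD n L).ncard := by
    have : (0 : ℝ) < ((p + 1 : ℝ) * n ^ k) ^ M := by positivity
    linarith
  refine ⟨L, fun i => ?_, Set.nonempty_of_ncard_ne_zero (by exact_mod_cast hpos.ne'), ?_⟩
  · induction i using Fin.cases <;> simp [L]
  rw [rho, div_le_iff₀ hpos]
  calc ((PR n L).ncard : ℝ) ≤ n * (p * n ^ k) ^ M := hPR'
    _ = n * (p / (p + 1)) ^ M * ((p + 1) * n ^ k) ^ M := by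
        rw [mul_assoc, ← mul_pow]
        congr 2
        field_simp
    _ ≤ n * (p / (p + 1)) ^ M * (2 * (UD n L).ncard) := by gcongr
    _ = _ := by ring

/-- Theorem 3 (consequence): for every fixed `n ≥ 2`, `ξ_{n,m} → 0` as `m → ∞`. -/
theorem stmt8 (n : ℕ) (hn : 2 ≤ n) :
    Filter.Tendsto (fun m : ℕ => xi n m) Filter.atTop (𝓝 0) := by
  set r : ℝ := ((n - 1) * n : ℕ) / (((n - 1) * n : ℕ) + 1)
  have hr : r < 1 := (div_lt_one (by positivity)).mpr (lt_add_one _)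
  rw [← tendsto_add_atTop_iff_nat 1]
  have hlim : Tendsto (fun M : ℕ => 2 * n * r ^ M) atTop (𝓝 0) := by
    simpa using (tendsto_pow_atTop_nhds_zero_of_lt_one (by positivity) hr).const_mul (2 * n : ℝ)
  refine squeeze_zero (fun m => xi_nonneg n _) (fun M => ?_) hlim
  obtain ⟨L, hL, hUD, hρ⟩ := exists_rho_le hn M
  exact (xi_le_rho hL hUD).trans hρ
end
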